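/- Fix d > 0 and α ∈ ℝ. For η ∈ ℝ with |d η| < 1 set α₁(η) := α − η/(2(1 + d η)), α₂(η) := α + η/(2(1 − d η)), and define Δ(k, η) := (α₁(η) α₂(η) − k²) sin(2 k d) + k (α₁(η) + α₂(η)) cos(2 k d) for k ∈ ℝ. Then for every k ∈ ℝ, the partial derivative of Δ with respect to η vanishes at η = 0: ∂Δ/∂η (k, 0) = 0. (Equivalently, the first-order perturbation coefficient λ_n^{(1)} of each eigenvalue of the perturbed Robin Laplacian vanishes.) -/

import Mathlib

/-- The perturbed Robin boundary constant `α₁(η) = α − η/(2(1+dη))`. -/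
noncomputable def alpha₁ (d α η : ℝ) : ℝ := α - η / (2 * (1 + d * η))

/-- The perturbed Robin boundary constant `α₂(η) = α + η/(2(1−dη))`. -/
noncomputable def alpha₂ (d α η : ℝ) : ℝ := α + η / (2 * (1 - d * η))

/-- The secular function `Δ(k,η)` whose zeros `k` give the eigenvalues `λ = k²` of the
Robin Laplacian on `(−d,d)` with boundary constants `α₁(η), α₂(η)`. -/
noncomputable def Δfun (d α k η : ℝ) : ℝ :=
  (alpha₁ d α η * alpha₂ d α η - k ^ 2) * Real.sin (2 * k * d)
    + k * (alpha₁ d α η + alpha₂ d α η) * Real.cos (2 * k * d)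

/-!
At `η = 0` both boundary constants equal `α` and they move with opposite speeds `∓1/2`.
Hence the sum `α₁ + α₂` and the product `α₁ α₂` are stationary at `η = 0`, and `Δ(k, ·)`,
being affine in these two quantities, is stationary as well.
-/

lemma hasDerivAt_div_two_mul_one_add_mul_zero (c : ℝ) :
    HasDerivAt (fun η : ℝ => η / (2 * (1 + c * η))) (1 / 2) 0 := by
  have hden : HasDerivAt (fun η : ℝ => 2 * (1 + c * η)) (2 * c) 0 := by
    simpa using (((hasDerivAt_id (0 : ℝ)).const_mul c).const_add 1).const_mul 2
  exact ((hasDerivAt_id' 0).fun_div hden (by norm_num)).congr_deriv (by norm_num)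

lemma hasDerivAt_alpha₁_zero (d α : ℝ) : HasDerivAt (alpha₁ d α) (-(1 / 2)) 0 :=
  (hasDerivAt_div_two_mul_one_add_mul_zero d).const_sub α

lemma hasDerivAt_alpha₂_zero (d α : ℝ) : HasDerivAt (alpha₂ d α) (1 / 2) 0 := by
  have h : alpha₂ d α = fun η => α + η / (2 * (1 + -d * η)) := by
    funext η
    rw [alpha₂, neg_mul, ← sub_eq_add_neg]
  rw [h]
  exact (hasDerivAt_div_two_mul_one_add_mul_zero (-d)).const_add α

theorem first_order_perturbation_vanishes_general
    (d α : ℝ) (k : ℝ) :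
    deriv (fun η : ℝ => Δfun d α k η) 0 = 0 := by
  have h₁ := hasDerivAt_alpha₁_zero d α
  have h₂ := hasDerivAt_alpha₂_zero d α
  have hΔ : HasDerivAt (fun η : ℝ => Δfun d α k η) _ 0 :=
    (((h₁.mul h₂).sub_const (k ^ 2)).mul_const (Real.sin (2 * k * d))).add
      (((h₁.add h₂).const_mul k).mul_const (Real.cos (2 * k * d)))
  rw [hΔ.deriv]
  simp only [alpha₁, alpha₂, zero_div, mul_zero, add_zero, sub_zero]
  ring

/-- The first-order derivative of the secular function `Δ(k, η)` with respect
to the perturbation parameter `η` vanishes at `η = 0` for every `k`; equivalently the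
first-order perturbation coefficient `λₙ⁽¹⁾` of each eigenvalue vanishes. -/
theorem first_order_perturbation_vanishes
    (d α : ℝ) (hd : 0 < d) (k : ℝ) :
    deriv (fun η : ℝ => Δfun d α k η) 0 = 0 :=
  first_order_perturbation_vanishes_general d α k
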